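/- Let a: [0,∞) → ℝ be locally integrable with a(t) ≥ 0 for almost every t ≥ 0, and let y₀ ≥ 0. Then the Cauchy problem y' + 2a√y = 0, y(0) = y₀ has exactly one nonnegative global solution, given by y(t) = (max(√y₀ − ∫₀ᵗ a(s) ds, 0))² for every t ≥ 0. -/

import Mathlib

open MeasureTheory Set Filter

/-- `a` is locally integrable on `[0,∞)`. -/
def LocIntOn (a : ℝ → ℝ) : Prop :=
  ∀ t : ℝ, 0 ≤ t → MeasureTheory.IntegrableOn a (Set.Icc 0 t) MeasureTheory.volume

/-- `y` is a nonnegative global solution of the Cauchy problem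
`y' + 2 a √y = 0`, `y 0 = y₀`, in integral form. -/
def IsSol (a : ℝ → ℝ) (y₀ : ℝ) (y : ℝ → ℝ) : Prop :=
  ContinuousOn y (Set.Ici 0) ∧ (∀ t : ℝ, 0 ≤ t → 0 ≤ y t) ∧
    ∀ t : ℝ, 0 ≤ t → y t = y₀ - 2 * ∫ s in (0:ℝ)..t, a s * Real.sqrt (y s)

/-- Membership in the set `S(a, y₀)`. -/
def MemS (a : ℝ → ℝ) (y₀ : ℝ) (w : ℝ → ℝ) : Prop :=
  (∀ t : ℝ, 0 ≤ t → 0 ≤ w t) ∧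
    ∃ g : ℝ → ℝ,
      (∀ t : ℝ, 0 ≤ t → MeasureTheory.IntegrableOn g (Set.Icc 0 t) MeasureTheory.volume) ∧
      (∀ t : ℝ, 0 ≤ t → w t = Real.sqrt y₀ + ∫ s in (0:ℝ)..t, g s) ∧
      (∀ᵐ s ∂(MeasureTheory.volume : MeasureTheory.Measure ℝ), 0 ≤ s → 0 < w s → g s = -a s)

/-- `y` is the maximal nonnegative global solution. -/
def IsMaxSol (a : ℝ → ℝ) (y₀ : ℝ) (y : ℝ → ℝ) : Prop :=
  IsSol a y₀ y ∧ ∀ z : ℝ → ℝ, IsSol a y₀ z → ∀ t : ℝ, 0 ≤ t → z t ≤ y t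

open Topology
open scoped NNReal

/-!
A primitive `A t = ∫₀ᵗ f` of an integrable function is absolutely continuous, and so is `φ ∘ A`
whenever `φ` is `C¹` near the range of `A`; hence the chain rule
`φ (A t) - φ (A 0) = ∫₀ᵗ φ'(A s) f s` holds. With `φ x = max x 0 ^ 2` applied to `√y₀ - ∫₀ᵗ a`
it shows that the formula solves the equation, whatever the sign of `a`. Conversely, a solution
`z` is nonincreasing because `a ≥ 0`, and as long as `z > 0` the chain rule for `√z` gives
`(√z)' = -a`, so `√z = √y₀ - ∫₀ᵗ a`. Letting `t` increase to the first zero `T` of `z` gives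
`∫₀ᵀ a = √y₀`; after `T` the solution vanishes while `∫₀ᵗ a ≥ √y₀`.
-/

theorem LipschitzOnWith.comp_absolutelyContinuousOnInterval {X Y : Type*} [PseudoMetricSpace X]
    [PseudoMetricSpace Y] {g : X → Y} {f : ℝ → X} {K : ℝ≥0} {t : Set X} {a b : ℝ}
    (hg : LipschitzOnWith K g t) (hf : AbsolutelyContinuousOnInterval f a b)
    (hft : MapsTo f (uIcc a b) t) : AbsolutelyContinuousOnInterval (g ∘ f) a b := by
  unfold AbsolutelyContinuousOnInterval at hf ⊢
  refine squeeze_zero' (Eventually.of_forall fun _ => Finset.sum_nonneg fun _ _ => dist_nonneg)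
    ?_ (by simpa using Tendsto.const_mul (K : ℝ) hf)
  filter_upwards [mem_inf_of_right (mem_principal_self _)] with E hE
  rw [Finset.mul_sum]
  exact Finset.sum_le_sum fun i hi =>
    hg.dist_le_mul _ (hft (hE.1 i hi).1) _ (hft (hE.1 i hi).2)

theorem AbsolutelyContinuousOnInterval.integral_comp_mul_deriv {F f φ φ' : ℝ → ℝ} {a b : ℝ}
    {s : Set ℝ} (hF : AbsolutelyContinuousOnInterval F a b)
    (hF' : ∀ᵐ x, x ∈ uIcc a b → HasDerivAt F (f x) x) (hFs : MapsTo F (uIcc a b) s)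
    (hφ : ∀ y ∈ s, HasDerivAt φ (φ' y) y) (hφ' : ContinuousOn φ' s) :
    ∫ x in a..b, φ' (F x) * f x = φ (F b) - φ (F a) := by
  have hKs : F '' uIcc a b ⊆ s := hFs.image_subset
  obtain ⟨C, hC⟩ :=
    (isCompact_uIcc.image_of_continuousOn hF.continuousOn).exists_bound_of_continuousOn
      (hφ'.mono hKs)
  -- `φ` is Lipschitz on the compact interval `F '' [a, b]`, so `φ ∘ F` is absolutely continuous.
  have hlip : LipschitzOnWith C.toNNReal φ (F '' uIcc a b) :=
    (isPreconnected_uIcc.image F hF.continuousOn).convex.lipschitzOnWith_of_nnnorm_hasDerivWithin_le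
      (fun y hy => (hφ y (hKs hy)).hasDerivWithinAt)
      (fun y hy => by rw [← NNReal.coe_le_coe, coe_nnnorm]; exact (hC y hy).trans (le_max_left _ _))
  have hFTC :=
    (hlip.comp_absolutelyContinuousOnInterval hF (mapsTo_image F _)).integral_deriv_eq_sub
  rw [Function.comp_apply, Function.comp_apply] at hFTC
  rw [← hFTC]
  refine intervalIntegral.integral_congr_ae ?_
  filter_upwards [hF'] with x hx hxab
  have hx' := uIoc_subset_uIcc hxab
  exact (((hφ _ (hFs hx')).comp x (hx hx')).deriv).symm

theorem IntervalIntegrable.integral_comp_mul_eq_sub {F f φ φ' : ℝ → ℝ} {a b : ℝ} {s : Set ℝ}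
    (hf : IntervalIntegrable f volume a b)
    (hF : ∀ x ∈ uIcc a b, F x = F a + ∫ t in a..x, f t) (hFs : MapsTo F (uIcc a b) s)
    (hφ : ∀ y ∈ s, HasDerivAt φ (φ' y) y) (hφ' : ContinuousOn φ' s) :
    ∫ x in a..b, φ' (F x) * f x = φ (F b) - φ (F a) := by
  set G : ℝ → ℝ := fun x => F a + ∫ t in a..x, f t
  have hG : AbsolutelyContinuousOnInterval G a b :=
    (LipschitzWith.const (F a)).lipschitzOnWith.absolutelyContinuousOnInterval.add
      (hf.absolutelyContinuousOnInterval_intervalIntegral left_mem_uIcc)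
  have hG' : ∀ᵐ x, x ∈ uIcc a b → HasDerivAt G (f x) x := by
    filter_upwards [hf.ae_hasDerivAt_integral] with x hx hxab
    exact (hx hxab a left_mem_uIcc).const_add (F a)
  have hGF : EqOn G F (uIcc a b) := fun x hx => (hF x hx).symm
  have hGs : MapsTo G (uIcc a b) s := fun x hx => hGF hx ▸ hFs hx
  rw [← hGF left_mem_uIcc, ← hGF right_mem_uIcc, ← hG.integral_comp_mul_deriv hG' hGs hφ hφ']
  exact intervalIntegral.integral_congr fun x hx => by simp only [hGF hx]

theorem hasDerivAt_max_zero_sq (x : ℝ) :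
    HasDerivAt (fun y : ℝ => max y 0 ^ 2) (2 * max x 0) x := by
  refine hasDerivAt_of_hasDerivAt_of_ne' (g := fun y => 2 * max y 0) (x := 0) (fun y hy => ?_)
    (by fun_prop) (by fun_prop) x
  rcases hy.lt_or_gt with hy | hy
  · have hloc : (fun y : ℝ => max y 0 ^ 2) =ᶠ[𝓝 y] fun _ => 0 := by
      filter_upwards [Iio_mem_nhds hy] with u (hu : u < 0)
      simp [max_eq_right hu.le]
    simpa [max_eq_right hy.le] using (hasDerivAt_const y (0 : ℝ)).congr_of_eventuallyEq hloc
  · have hloc : (fun y : ℝ => max y 0 ^ 2) =ᶠ[𝓝 y] fun u => u ^ 2 := by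
      filter_upwards [Ioi_mem_nhds hy] with u (hu : 0 < u)
      simp [max_eq_left hu.le]
    simpa [max_eq_left hy.le] using (hasDerivAt_pow 2 y).congr_of_eventuallyEq hloc

theorem integral_mono_upper_of_ae_nonneg {g : ℝ → ℝ} (hg : ∀ᵐ t, 0 ≤ t → 0 ≤ g t) {u v : ℝ}
    (hgi : IntervalIntegrable g volume 0 v) (hu : 0 ≤ u) (huv : u ≤ v) :
    ∫ s in (0:ℝ)..u, g s ≤ ∫ s in (0:ℝ)..v, g s := by
  refine intervalIntegral.integral_mono_interval le_rfl hu huv ?_ hgi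
  rw [EventuallyLE, ae_restrict_iff' measurableSet_Ioc]
  filter_upwards [hg] with t ht htv using ht htv.1.le

theorem LocIntOn.intervalIntegrable {a : ℝ → ℝ} (ha : LocIntOn a) {t : ℝ} (ht : 0 ≤ t) :
    IntervalIntegrable a volume 0 t :=
  (intervalIntegrable_iff_integrableOn_Icc_of_le ht).mpr (ha t ht)

theorem LocIntOn.continuousOn_primitive {a : ℝ → ℝ} (ha : LocIntOn a) :
    ContinuousOn (fun t => ∫ s in (0:ℝ)..t, a s) (Ici 0) := by
  intro t (ht : 0 ≤ t)
  have hIcc : Icc 0 (t + 1) ∈ 𝓝[Ici 0] t := by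
    rw [← Ici_inter_Iic]
    exact inter_mem_nhdsWithin _ (Iic_mem_nhds (by linarith))
  have hcont := intervalIntegral.continuousOn_primitive_interval (a := 0) (b := t + 1)
    (by rw [uIcc_of_le (by linarith)]; exact ha (t + 1) (by linarith))
  rw [uIcc_of_le (by linarith)] at hcont
  exact (hcont t ⟨ht, by linarith⟩).mono_of_mem_nhdsWithin hIcc

theorem isSol_sq_max_sub_integral {a : ℝ → ℝ} {y₀ : ℝ} (ha : LocIntOn a) (hy₀ : 0 ≤ y₀) :
    IsSol a y₀ (fun t => (max (Real.sqrt y₀ - ∫ s in (0:ℝ)..t, a s) 0) ^ 2) := by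
  refine ⟨((continuousOn_const.sub ha.continuousOn_primitive).sup continuousOn_const).pow 2,
    fun t _ => sq_nonneg _, fun t ht => ?_⟩
  have hchain := (ha.intervalIntegrable ht).neg.integral_comp_mul_eq_sub
    (F := fun t => Real.sqrt y₀ - ∫ s in (0:ℝ)..t, a s) (s := univ)
    (fun x _ => by simp [intervalIntegral.integral_neg, sub_eq_add_neg]) (mapsTo_univ _ _)
    (fun y _ => hasDerivAt_max_zero_sq y)
    (by fun_prop : Continuous fun y : ℝ => 2 * max y 0).continuousOn
  have hintegrand : ∀ x, a x * Real.sqrt (max (Real.sqrt y₀ - ∫ s in (0:ℝ)..x, a s) 0 ^ 2)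
      = -(2 * max (Real.sqrt y₀ - ∫ s in (0:ℝ)..x, a s) 0 * -a x) / 2 := fun x => by
    rw [Real.sqrt_sq (le_max_right _ _)]; ring
  simp only [Pi.neg_apply, intervalIntegral.integral_same, sub_zero,
    max_eq_left (Real.sqrt_nonneg y₀), Real.sq_sqrt hy₀] at hchain
  simp only [hintegrand, intervalIntegral.integral_div, intervalIntegral.integral_neg, hchain]
  ring

namespace IsSol

variable {a : ℝ → ℝ} {y₀ : ℝ} {z : ℝ → ℝ}

theorem apply_zero (hz : IsSol a y₀ z) : z 0 = y₀ := by
  simpa using hz.2.2 0 le_rfl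

theorem intervalIntegrable_mul_sqrt (ha : LocIntOn a) (hz : IsSol a y₀ z) {t : ℝ} (ht : 0 ≤ t) :
    IntervalIntegrable (fun s => a s * Real.sqrt (z s)) volume 0 t :=
  (intervalIntegrable_iff_integrableOn_Icc_of_le ht).mpr <|
    (ha t ht).mul_continuousOn (hz.1.mono Icc_subset_Ici_self).sqrt isCompact_Icc

theorem antitoneOn (ha : LocIntOn a) (hann : ∀ᵐ t, 0 ≤ t → 0 ≤ a t) (hz : IsSol a y₀ z) :
    AntitoneOn z (Ici 0) := by
  intro u (hu : 0 ≤ u) v (hv : 0 ≤ v) huv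
  have hnonneg : ∀ᵐ s, 0 ≤ s → 0 ≤ a s * Real.sqrt (z s) := by
    filter_upwards [hann] with s hs hs0 using mul_nonneg (hs hs0) (Real.sqrt_nonneg _)
  have := integral_mono_upper_of_ae_nonneg hnonneg (hz.intervalIntegrable_mul_sqrt ha hv) hu huv
  rw [hz.2.2 u hu, hz.2.2 v hv]
  linarith

theorem sqrt_eq_sub_integral_of_pos (ha : LocIntOn a) (hz : IsSol a y₀ z) {s : ℝ} (hs : 0 ≤ s)
    (hpos : ∀ u ∈ Icc 0 s, 0 < z u) :
    Real.sqrt (z s) = Real.sqrt y₀ - ∫ u in (0:ℝ)..s, a u := by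
  rw [← uIcc_of_le hs] at hpos
  have hchain := ((hz.intervalIntegrable_mul_sqrt ha hs).const_mul (-2)).integral_comp_mul_eq_sub
    (F := z) (s := Ioi 0) (φ' := fun y => 1 / (2 * Real.sqrt y))
    (fun x hx => by
      rw [intervalIntegral.integral_const_mul, hz.apply_zero, hz.2.2 x (uIcc_of_le hs ▸ hx).1]
      ring)
    hpos (fun y hy => Real.hasDerivAt_sqrt (ne_of_gt hy))
    (continuousOn_const.div (continuousOn_const.mul Real.continuous_sqrt.continuousOn)
      fun y (hy : 0 < y) => by positivity)
  have hintegrand : EqOn (fun x => 1 / (2 * Real.sqrt (z x)) * (-2 * (a x * Real.sqrt (z x))))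
      (fun x => -a x) (uIcc 0 s) := fun x hx => by
    have := (Real.sqrt_pos.mpr (hpos x hx)).ne'
    dsimp only
    field_simp
  rw [intervalIntegral.integral_congr hintegrand, intervalIntegral.integral_neg,
    hz.apply_zero] at hchain
  linarith

theorem sqrt_le_integral_of_eq_zero (ha : LocIntOn a) (hann : ∀ᵐ t, 0 ≤ t → 0 ≤ a t)
    (hz : IsSol a y₀ z) {t : ℝ} (ht : 0 ≤ t) (hzt : z t = 0) :
    Real.sqrt y₀ ≤ ∫ s in (0:ℝ)..t, a s := by
  set E := Icc 0 t ∩ z ⁻¹' {0}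
  have hEb : BddBelow E := ⟨0, fun u hu => hu.1.1⟩
  set T := sInf E
  obtain ⟨⟨hT0, hTt⟩, hzT : z T = 0⟩ : T ∈ E :=
    ((hz.1.mono Icc_subset_Ici_self).preimage_isClosed_of_isClosed isClosed_Icc
      isClosed_singleton).csInf_mem ⟨t, ⟨ht, le_rfl⟩, hzt⟩ hEb
  suffices hT : Real.sqrt y₀ = ∫ s in (0:ℝ)..T, a s from
    hT ▸ integral_mono_upper_of_ae_nonneg hann (ha.intervalIntegrable ht) hT0 hTt
  rcases hT0.eq_or_lt with hT_eq | hT_pos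
  · have hz0 : z 0 = 0 := hT_eq ▸ hzT
    rw [← hT_eq, intervalIntegral.integral_same, ← hz.apply_zero, hz0, Real.sqrt_zero]
  have hpos : ∀ u ∈ Ico 0 T, 0 < z u := fun u hu =>
    (hz.2.1 u hu.1).lt_of_ne fun h =>
      notMem_of_lt_csInf hu.2 hEb ⟨⟨hu.1, hu.2.le.trans hTt⟩, h.symm⟩
  have heq : EqOn (fun u => Real.sqrt (z u)) (fun u => Real.sqrt y₀ - ∫ s in (0:ℝ)..u, a s)
      (Icc 0 T) :=
    EqOn.of_subset_closure
      (fun u hu => hz.sqrt_eq_sub_integral_of_pos ha hu.1 fun v hv =>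
        hpos v ⟨hv.1, hv.2.trans_lt hu.2⟩)
      (hz.1.mono Icc_subset_Ici_self).sqrt
      (continuousOn_const.sub (ha.continuousOn_primitive.mono Icc_subset_Ici_self))
      Ico_subset_Icc_self (closure_Ico hT_pos.ne).ge
  have := heq ⟨hT0, le_rfl⟩
  simp only [hzT, Real.sqrt_zero] at this
  linarith

end IsSol

theorem stmt6 (a : ℝ → ℝ) (y₀ : ℝ) (ha : LocIntOn a)
    (hann : ∀ᵐ t ∂(MeasureTheory.volume : MeasureTheory.Measure ℝ), 0 ≤ t → 0 ≤ a t)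
    (hy₀ : 0 ≤ y₀) :
    IsSol a y₀ (fun t => (max (Real.sqrt y₀ - ∫ s in (0:ℝ)..t, a s) 0) ^ 2) ∧
      ∀ z : ℝ → ℝ, IsSol a y₀ z → ∀ t : ℝ, 0 ≤ t →
        z t = (max (Real.sqrt y₀ - ∫ s in (0:ℝ)..t, a s) 0) ^ 2 := by
  refine ⟨isSol_sq_max_sub_integral ha hy₀, fun z hz t ht => ?_⟩
  rcases (hz.2.1 t ht).lt_or_eq with hpos | hzero
  · have hpos' : ∀ u ∈ Icc 0 t, 0 < z u := fun u hu =>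
      hpos.trans_le (hz.antitoneOn ha hann hu.1 ht hu.2)
    rw [← hz.sqrt_eq_sub_integral_of_pos ha ht hpos', max_eq_left (Real.sqrt_nonneg _),
      Real.sq_sqrt (hz.2.1 t ht)]
  · rw [← hzero, max_eq_right (by linarith [hz.sqrt_le_integral_of_eq_zero ha hann ht hzero.symm])]
    ring
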